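/- arXiv:2508.06279 — 4 statements merged into one kernel-verified Lean document; each statement's English description precedes it below -/
import Mathlib

section
/- Let K be a field of characteristic p > 0, d = p^ℓ, λ ∈ K, α ∈ K, and γ ∈ K with γ^{p^r} = γ for some positive integer r (i.e., γ lies in a finite subfield). Suppose f_λ^m(α) = α + γ for some positive integer m, where f_λ(z) = z^d + λ. Then for every n ≥ 1, f_λ^{mn}(α) = α + Σ_{j=0}^{n-1} γ^{p^{jmℓ}}. In particular, f_λ^{mn}(α) − α lies in the finite field F_{p^r} for all n ≥ 1. -/
theorem iterate_mn_formula
    (K : Type*) [Field K] (p ℓ r : ℕ) (hp : p.Prime) [CharP K p]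
    (hℓ : 1 ≤ ℓ) (hr : 1 ≤ r) (lam α γ : K) (hγ : γ ^ (p ^ r) = γ)
    (m : ℕ) (hm : 1 ≤ m)
    (h : (fun z : K => z ^ (p ^ ℓ) + lam)^[m] α = α + γ) :
    ∀ n : ℕ, 1 ≤ n →
      (fun z : K => z ^ (p ^ ℓ) + lam)^[m * n] α
        = α + ∑ j ∈ Finset.range n, γ ^ (p ^ (j * m * ℓ)) ∧
      ((fun z : K => z ^ (p ^ ℓ) + lam)^[m * n] α - α) ^ (p ^ r)
        = (fun z : K => z ^ (p ^ ℓ) + lam)^[m * n] α - α := by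
  haveI := Fact.mk hp
  haveI : ExpChar K p := ExpChar.prime hp
  set f : K → K := fun z : K => z ^ (p ^ ℓ) + lam with hf
  -- iterate shifts
  have key : ∀ k : ℕ, ∀ a b : K, f^[k] (a + b) = f^[k] a + b ^ (p ^ (k * ℓ)) := by
    intro k
    induction k with
    | zero => intro a b; simp
    | succ k ih =>
      intro a b
      rw [Function.iterate_succ_apply, Function.iterate_succ_apply]
      have hstep : f (a + b) = f a + b ^ (p ^ ℓ) := by
        simp only [hf, add_pow_char_pow]
        ring
      rw [hstep, ih]
      congr 1
      rw [← pow_mul, ← pow_add]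
      congr 1
      ring
  have formula : ∀ n : ℕ, f^[m * n] α = α + ∑ j ∈ Finset.range n, γ ^ (p ^ (j * m * ℓ)) := by
    intro n
    induction n with
    | zero => simp
    | succ n ih =>
      have : m * (n + 1) = m * n + m := by ring
      rw [this, Function.iterate_add_apply, h, key, ih, Finset.sum_range_succ]
      rw [show m * n * ℓ = n * m * ℓ by ring]; ring
  intro n _
  refine ⟨formula n, ?_⟩
  rw [formula n, add_sub_cancel_left, sum_pow_char_pow]
  refine Finset.sum_congr rfl fun j _ => ?_
  rw [← pow_mul, mul_comm, pow_mul, hγ]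
end

section
/- Let K be a field of characteristic p > 0, d = p^ℓ, λ ∈ K, α ∈ K, and γ an element of a finite subfield of K (γ^{p^r} = γ for some r ≥ 1). If f_λ^m(α) = α + γ for some positive integer m, where f_λ(z) = z^d + λ, then α is periodic under f_λ, i.e., there exists a positive integer N with f_λ^N(α) = α. -/
theorem periodic_of_diff_in_finite_subfield
    (K : Type*) [Field K] (p ℓ r : ℕ) (hp : p.Prime) [CharP K p]
    (hℓ : 1 ≤ ℓ) (hr : 1 ≤ r) (lam α γ : K) (hγ : γ ^ (p ^ r) = γ)
    (m : ℕ) (hm : 1 ≤ m)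
    (h : (fun z : K => z ^ (p ^ ℓ) + lam)^[m] α = α + γ) :
    ∃ N : ℕ, 1 ≤ N ∧ (fun z : K => z ^ (p ^ ℓ) + lam)^[N] α = α := by
  haveI : Fact p.Prime := ⟨hp⟩
  set g : K → K := fun z => z ^ (p ^ ℓ) + lam with hgdef
  have hpℓ : p ^ ℓ ≠ 0 := pow_ne_zero _ hp.pos.ne'
  -- g is injective
  have hginj : Function.Injective g := by
    intro a b hab
    have h1 : a ^ (p ^ ℓ) = b ^ (p ^ ℓ) := by simpa [hgdef] using hab
    have h2 : (a - b) ^ (p ^ ℓ) = 0 := by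
      rw [sub_pow_char_pow, h1, sub_self]
    exact sub_eq_zero.mp (pow_eq_zero_iff hpℓ |>.mp h2)
  -- iterates act additively on a translate
  have hgadd : ∀ x c : K, g (x + c) = g x + c ^ (p ^ ℓ) := by
    intro x c
    simp only [hgdef, add_pow_char_pow]
    ring
  have hiter : ∀ (n : ℕ) (x c : K), g^[n] (x + c) = g^[n] x + c ^ (p ^ (ℓ * n)) := by
    intro n
    induction n with
    | zero => intro x c; simp
    | succ n ih =>
      intro x c
      rw [Function.iterate_succ_apply, hgadd, ih, Function.iterate_succ_apply,
        ← pow_mul, ← pow_add, show ℓ + ℓ * n = ℓ * (n + 1) from by ring]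
  -- each iterate g^[k*m] α lies in α + F_{p^r}
  have hmem : ∀ k : ℕ, ∃ c : K, c ^ (p ^ r) = c ∧ g^[k * m] α = α + c := by
    intro k
    induction k with
    | zero => exact ⟨0, zero_pow (pow_ne_zero r hp.pos.ne'), by simp⟩
    | succ k ih =>
      obtain ⟨c, hc, hgc⟩ := ih
      refine ⟨γ + c ^ (p ^ (ℓ * m)), ?_, ?_⟩
      · rw [add_pow_char_pow, hγ, ← pow_mul, mul_comm, pow_mul, hc]
      · rw [add_mul, one_mul, add_comm (k * m) m, Function.iterate_add_apply,
          hgc, hiter, h]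
        ring
  -- the set of such c is finite
  have hfin : Set.Finite {x : K | x ^ (p ^ r) = x} := by
    have hq : (Polynomial.X ^ (p ^ r) - Polynomial.X : Polynomial K) ≠ 0 := by
      intro hq
      have h2 : 2 ≤ p ^ r := by
        calc 2 ≤ p := hp.two_le
        _ ≤ p ^ r := Nat.le_self_pow (by omega) p
      have := congrArg (Polynomial.coeff · (p ^ r)) hq
      simp only [Polynomial.coeff_sub, Polynomial.coeff_X_pow, if_pos rfl,
        Polynomial.coeff_X, if_neg (by omega : ¬ (1 : ℕ) = p ^ r),
        Polynomial.coeff_zero, sub_zero] at this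
      exact one_ne_zero this
    apply Set.Finite.subset (Polynomial.finite_setOf_isRoot hq)
    intro x hx
    simp only [Set.mem_setOf_eq, Polynomial.IsRoot, Polynomial.eval_sub,
      Polynomial.eval_pow, Polynomial.eval_X]
    rw [hx, sub_self]
  -- pigeonhole
  haveI : Finite {x : K // x ^ (p ^ r) = x} := hfin.to_subtype
  have key : ∃ i j : ℕ, i ≠ j ∧ g^[i * m] α = g^[j * m] α := by
    obtain ⟨i, j, hij, heq⟩ := Finite.exists_ne_map_eq_of_infinite
      (fun k : ℕ => (⟨Classical.choose (hmem k),
        (Classical.choose_spec (hmem k)).1⟩ : {x : K // x ^ (p ^ r) = x}))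
    refine ⟨i, j, hij, ?_⟩
    have hval : Classical.choose (hmem i) = Classical.choose (hmem j) :=
      congrArg Subtype.val heq
    rw [(Classical.choose_spec (hmem i)).2, (Classical.choose_spec (hmem j)).2, hval]
  obtain ⟨i, j, hij, heq⟩ := key
  wlog hlt : i < j generalizing i j
  · exact this j i hij.symm heq.symm (by omega)
  refine ⟨(j - i) * m, by nlinarith [Nat.sub_pos_of_lt hlt], ?_⟩
  apply hginj.iterate (i * m)
  rw [← Function.iterate_add_apply, ← Nat.add_mul]
  rw [show i + (j - i) = j from by omega]
  exact heq.symm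
end

section
/- Let K be a field of characteristic p > 0, d = p^ℓ, and λ, α, β ∈ K. If α and β are periodic points of f_λ(z) = z^d + λ (equivalently, both have finite forward orbits), then α − β lies in the algebraic closure of F_p inside K, i.e., (α−β)^{p^{n₁ℓ}} = (α−β)^{p^{n₂ℓ}} for some positive integers n₁ < n₂. -/
lemma iter_diff_pow (K : Type*) [Field K] (p ℓ : ℕ) (hp : p.Prime) [CharP K p]
    (lam α β : K) (n : ℕ) :
    (fun z : K => z ^ (p ^ ℓ) + lam)^[n] α - (fun z : K => z ^ (p ^ ℓ) + lam)^[n] β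
      = (α - β) ^ (p ^ (n * ℓ)) := by
  induction n with
  | zero => simp
  | succ n ih =>
    rw [Function.iterate_succ_apply', Function.iterate_succ_apply']
    have : Fact p.Prime := ⟨hp⟩
    rw [add_sub_add_right_eq_sub, ← sub_pow_char_pow, ih, ← pow_mul,
      ← pow_add]
    congr 1
    ring

theorem diff_of_periodic_points_in_Fpbar
    (K : Type*) [Field K] (p ℓ : ℕ) (hp : p.Prime) [CharP K p]
    (hℓ : 1 ≤ ℓ) (lam α β : K)
    (hα : ∃ N : ℕ, 1 ≤ N ∧ (fun z : K => z ^ (p ^ ℓ) + lam)^[N] α = α)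
    (hβ : ∃ M : ℕ, 1 ≤ M ∧ (fun z : K => z ^ (p ^ ℓ) + lam)^[M] β = β) :
    ∃ n₁ n₂ : ℕ, 1 ≤ n₁ ∧ n₁ < n₂ ∧
      (α - β) ^ (p ^ (n₁ * ℓ)) = (α - β) ^ (p ^ (n₂ * ℓ)) := by
  obtain ⟨N, hN, hNα⟩ := hα
  obtain ⟨M, hM, hMβ⟩ := hβ
  have hA : (fun z : K => z ^ (p ^ ℓ) + lam)^[N * M] α = α := by
    rw [Function.iterate_mul]; exact Function.iterate_fixed hNα M
  have hB : (fun z : K => z ^ (p ^ ℓ) + lam)^[N * M] β = β := by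
    rw [mul_comm, Function.iterate_mul]; exact Function.iterate_fixed hMβ N
  have key : (α - β) ^ (p ^ (N * M * ℓ)) = α - β := by
    have := iter_diff_pow K p ℓ hp lam α β (N * M)
    rw [hA, hB] at this
    exact this.symm
  refine ⟨N * M, 2 * (N * M), Nat.one_le_iff_ne_zero.mpr (by positivity),
    by nlinarith, ?_⟩
  have h2 : 2 * (N * M) * ℓ = N * M * ℓ + N * M * ℓ := by ring
  rw [h2, pow_add, pow_mul (α - β), key]
  exact key.symm
end

section
/- Let p be a prime, ℓ ≥ 1, d = p^ℓ, and let K be an algebraically closed field of characteristic p. Then for any α, β ∈ K, the set C(α;β) = {λ ∈ K : f_λ^m(α) = β for some positive integer m} is infinite, where f_λ(z) = z^d + λ. -/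
/-!
Because `z ↦ z ^ d` is additive in characteristic `p`, the orbit is explicit:
`f_λ^[m] α = α ^ d ^ m + ∑ i < m, λ ^ d ^ i`. So every root of the additive polynomial
`∑ i < m, X ^ d ^ i - (β - α ^ d ^ m)` lies in `C(α;β)`. Its derivative is `1`, so it is separable
of degree `d ^ (m - 1)` and has that many distinct roots in `K`, which is unbounded in `m`.
-/

open Polynomial Finset

theorem AddMonoidHom.iterate_map_add_const {M : Type*} [AddCommMonoid M] (f : M →+ M)
    (c a : M) (m : ℕ) :
    (fun z => f z + c)^[m] a = f^[m] a + ∑ i ∈ Finset.range m, f^[i] c := by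
  induction m with
  | zero => simp
  | succ m ih =>
    rw [Function.iterate_succ_apply', ih, map_add, map_sum, sum_range_succ' (fun i => f^[i] c),
      Function.iterate_succ_apply']
    simp only [Function.iterate_succ_apply', Function.iterate_zero_apply, add_assoc]

theorem iterate_pow_char_pow_add_const {R : Type*} [CommSemiring R] (p : ℕ) [ExpChar R p]
    (n m : ℕ) (c a : R) :
    (fun z => z ^ p ^ n + c)^[m] a = a ^ (p ^ n) ^ m + ∑ i ∈ range m, c ^ (p ^ n) ^ i := by
  have hpow : ⇑(iterateFrobenius R p n : R →+ R) = (· ^ p ^ n) := rfl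
  simpa only [hpow, pow_iterate] using
    (iterateFrobenius R p n : R →+ R).iterate_map_add_const c a m

theorem natDegree_sum_X_pow_pow {R : Type*} [Semiring R] [Nontrivial R] {q : ℕ} (hq : 1 < q)
    (m : ℕ) : (∑ i ∈ range (m + 1), (X : R[X]) ^ q ^ i).natDegree = q ^ m := by
  induction m with
  | zero => simp
  | succ m ih =>
    rw [sum_range_succ, natDegree_add_eq_right_of_natDegree_lt, natDegree_X_pow]
    rw [ih, natDegree_X_pow]
    exact Nat.pow_lt_pow_right hq m.lt_succ_self

theorem derivative_sum_X_pow_pow {R : Type*} [Semiring R] {q : ℕ} (hq : (q : R) = 0) (m : ℕ) :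
    derivative (∑ i ∈ range (m + 1), (X : R[X]) ^ q ^ i) = 1 := by
  simp [sum_range_succ', derivative_X_pow, hq]

theorem ncard_setOf_sum_pow_pow_eq {K : Type*} [Field K] [IsAlgClosed K] {q : ℕ}
    (hq₀ : (q : K) = 0) (hq₁ : 1 < q) (m : ℕ) (c : K) :
    {x : K | ∑ i ∈ range (m + 1), x ^ q ^ i = c}.ncard = q ^ m := by
  classical
  set P : K[X] := ∑ i ∈ range (m + 1), X ^ q ^ i - C c
  have hsep : P.Separable := by
    rw [separable_def, derivative_sub, derivative_C, sub_zero, derivative_sum_X_pow_pow hq₀]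
    exact isCoprime_one_right
  have hroots : {x : K | ∑ i ∈ range (m + 1), x ^ q ^ i = c} = ↑P.roots.toFinset := by
    ext x
    simp [P, mem_roots hsep.ne_zero, eval_finsetSum, sub_eq_zero]
  rw [hroots, Set.ncard_coe_finset, Multiset.toFinset_card_of_nodup (nodup_roots hsep),
    IsAlgClosed.card_roots_eq_natDegree, natDegree_sub_C, natDegree_sum_X_pow_pow hq₁]

theorem C_alpha_beta_infinite_power_of_p
    (K : Type*) [Field K] [IsAlgClosed K] (p ℓ : ℕ) (hp : p.Prime) [CharP K p]
    (hℓ : 1 ≤ ℓ) (α β : K) :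
    {lam : K | ∃ m : ℕ, 1 ≤ m ∧ (fun z : K => z ^ (p ^ ℓ) + lam)^[m] α = β}.Infinite := by
  have : Fact p.Prime := ⟨hp⟩
  have hq₀ : ((p ^ ℓ : ℕ) : K) = 0 := by
    rw [Nat.cast_pow, CharP.cast_eq_zero, zero_pow (by omega)]
  have hq₁ : 1 < p ^ ℓ := Nat.one_lt_pow (by omega) hp.one_lt
  set S := {lam : K | ∃ m : ℕ, 1 ≤ m ∧ (fun z : K => z ^ (p ^ ℓ) + lam)^[m] α = β}
  intro hS
  set n := S.ncard
  have hsub : {x : K | ∑ i ∈ range (n + 1), x ^ (p ^ ℓ) ^ i = β - α ^ (p ^ ℓ) ^ (n + 1)} ⊆ S :=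
    fun lam hlam => ⟨n + 1, by omega, by
      rw [iterate_pow_char_pow_add_const]; exact eq_sub_iff_add_eq'.mp hlam⟩
  have hle := Set.ncard_le_ncard hsub hS
  rw [ncard_setOf_sum_pow_pow_eq hq₀ hq₁] at hle
  exact (Nat.lt_pow_self hq₁).not_ge hle
end
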